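/- Let X be a random vector in ℝ^k of the form X = (ḡ/p)·M where ḡ ∼ N(μ, (σ_g²/B)·I_k) and M is a Bernoulli(p) scalar independent of ḡ, 0 < p ≤ 1. Then the covariance matrix of X equals (σ_g²/(pB))·I_k + ((1-p)/p)·diag(μ)², where diag(μ)² is the diagonal matrix with entries μᵢ². -/

import Mathlib

/-!
Write `X = ḡ / p · M`. Since `M ∈ {0, 1}` we have `M² = M`, so by independence of `ḡᵢ`
and `Mᵢ` both moments of `Xᵢ` reduce to those of `ḡᵢ`: `E[Xᵢ] = μᵢ` and
`E[Xᵢ²] = E[ḡᵢ²] / p`.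
This gives the diagonal `Var ḡᵢ / p + (1 - p) / p · μᵢ²`; off the diagonal the entries
vanish because `ḡᵢ Mᵢ` and `ḡⱼ Mⱼ` are independent.
-/

open MeasureTheory ProbabilityTheory

section BernoulliMask

variable {Ω : Type*} [MeasurableSpace Ω] {P : Measure Ω} {X Y M N : Ω → ℝ} {p : ℝ}

lemma integral_div_mul_of_indepFun (hXM : IndepFun X M P) (hX : AEStronglyMeasurable X P)
    (hMmean : ∫ ω, M ω ∂P = p) (hp : p ≠ 0) :
    ∫ ω, X ω / p * M ω ∂P = ∫ ω, X ω ∂P := by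
  have hM : AEStronglyMeasurable M P :=
    (Integrable.of_integral_ne_zero (hMmean ▸ hp)).aestronglyMeasurable
  simp_rw [div_mul_eq_mul_div]
  rw [integral_div, hXM.integral_fun_mul_eq_mul_integral hX hM, hMmean]
  field_simp

lemma integral_div_mul_mul_self_of_indepFun (hXM : IndepFun X M P)
    (hX : AEStronglyMeasurable X P) (hM01 : ∀ ω, M ω = 0 ∨ M ω = 1)
    (hMmean : ∫ ω, M ω ∂P = p) (hp : p ≠ 0) :
    ∫ ω, (X ω / p * M ω) * (X ω / p * M ω) ∂P = (∫ ω, X ω ^ 2 ∂P) / p := by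
  have hmask : ∀ ω, (X ω / p * M ω) * (X ω / p * M ω) = X ω ^ 2 / p * M ω / p := by
    intro ω
    rcases hM01 ω with h | h <;> simp only [h] <;> ring
  have hX2M : IndepFun (fun ω => X ω ^ 2) M P :=
    hXM.comp (φ := fun x => x ^ 2) (ψ := id) (measurable_id.pow_const 2) measurable_id
  simp_rw [hmask]
  rw [integral_div, integral_div_mul_of_indepFun hX2M (hX.pow 2) hMmean hp]

lemma integral_div_mul_mul_self_sub_eq_of_indepFun [IsProbabilityMeasure P]
    (hXM : IndepFun X M P) (hX : MemLp X 2 P) (hM01 : ∀ ω, M ω = 0 ∨ M ω = 1)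
    (hMmean : ∫ ω, M ω ∂P = p) (hp : p ≠ 0) :
    (∫ ω, (X ω / p * M ω) * (X ω / p * M ω) ∂P)
        - (∫ ω, X ω / p * M ω ∂P) * ∫ ω, X ω / p * M ω ∂P
      = variance X P / p + (1 - p) / p * (∫ ω, X ω ∂P) ^ 2 := by
  rw [integral_div_mul_mul_self_of_indepFun hXM hX.aestronglyMeasurable hM01 hMmean hp,
    integral_div_mul_of_indepFun hXM hX.aestronglyMeasurable hMmean hp,
    variance_eq_sub hX, Pi.pow_def]
  field_simp
  ring

lemma integral_div_mul_mul_sub_eq_zero_of_indepFun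
    (h : IndepFun (fun ω => X ω * M ω) (fun ω => Y ω * N ω) P)
    (hXM : AEStronglyMeasurable (fun ω => X ω * M ω) P)
    (hYN : AEStronglyMeasurable (fun ω => Y ω * N ω) P) :
    (∫ ω, (X ω / p * M ω) * (Y ω / p * N ω) ∂P)
        - (∫ ω, X ω / p * M ω ∂P) * ∫ ω, Y ω / p * N ω ∂P = 0 := by
  have hscaled := (h.comp (measurable_div_const p) (measurable_div_const p))
    |>.integral_fun_mul_eq_mul_integral
    (hXM.aemeasurable.div_const p).aestronglyMeasurable
    (hYN.aemeasurable.div_const p).aestronglyMeasurable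
  rw [sub_eq_zero]
  simpa only [Function.comp_apply, div_mul_eq_mul_div] using hscaled

end BernoulliMask

theorem childTuningF_covariance_matrix_general
    {Ω : Type*} [MeasurableSpace Ω] (P : Measure Ω) [IsProbabilityMeasure P]
    (k B : ℕ) (p σg : ℝ) (μ : Fin k → ℝ)
    (hp : 0 < p)
    (gbar M : Fin k → Ω → ℝ)
    (hgL2 : ∀ i, MemLp (gbar i) 2 P)
    (hgmean : ∀ i, ∫ ω, gbar i ω ∂P = μ i)
    (hgvar : ∀ i, variance (gbar i) P = σg ^ 2 / B)
    (hM01 : ∀ i ω, M i ω = 0 ∨ M i ω = 1)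
    (hMmean : ∀ i, ∫ ω, M i ω ∂P = p)
    (hgM : ∀ i j, IndepFun (gbar i) (M j) P)
    (hprod : ∀ i j, i ≠ j →
      IndepFun (fun ω => gbar i ω * M i ω) (fun ω => gbar j ω * M j ω) P) :
    (Matrix.of fun i j =>
        (∫ ω, (gbar i ω / p * M i ω) * (gbar j ω / p * M j ω) ∂P)
          - (∫ ω, gbar i ω / p * M i ω ∂P) * ∫ ω, gbar j ω / p * M j ω ∂P)
      = (σg ^ 2 / (p * B)) • (1 : Matrix (Fin k) (Fin k) ℝ)
        + ((1 - p) / p) • Matrix.diagonal (fun i => (μ i) ^ 2) := by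
  have hgbarM : ∀ i, AEStronglyMeasurable (fun ω => gbar i ω * M i ω) P := fun i =>
    (hgL2 i).aestronglyMeasurable.mul
      (Integrable.of_integral_ne_zero ((hMmean i).symm ▸ hp.ne')).aestronglyMeasurable
  ext i j
  rcases eq_or_ne i j with rfl | hij
  · rw [Matrix.of_apply, integral_div_mul_mul_self_sub_eq_of_indepFun (hgM i i) (hgL2 i) (hM01 i)
      (hMmean i) hp.ne', hgvar, hgmean]
    simp [div_div, mul_comm]
  · rw [Matrix.of_apply, integral_div_mul_mul_sub_eq_zero_of_indepFun (hprod i j hij)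
      (hgbarM i) (hgbarM j)]
    simp [hij]

/-- Full covariance statement of Theorem 1 (learning rate `η = 1`).  The
mini-batch averaged gradient `ḡ` has independent coordinates with mean `μ i`
and variance `σg²/B`, and each coordinate is masked by an independent
Bernoulli(`p`) variable `M i` (independently per coordinate) and rescaled by
`1/p`.  Then the covariance matrix of `X = (ḡ/p)·M` equals
`(σg²/(pB))·I_k + ((1-p)/p)·diag(μ)²`. -/
theorem childTuningF_covariance_matrix
    {Ω : Type*} [MeasurableSpace Ω] (P : Measure Ω) [IsProbabilityMeasure P]
    (k B : ℕ) (hB : 1 ≤ B) (p σg : ℝ) (μ : Fin k → ℝ)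
    (hp : 0 < p) (hp1 : p ≤ 1)
    (gbar M : Fin k → Ω → ℝ)
    (hgL2 : ∀ i, MemLp (gbar i) 2 P)
    (hgmean : ∀ i, ∫ ω, gbar i ω ∂P = μ i)
    (hgvar : ∀ i, variance (gbar i) P = σg ^ 2 / B)
    (hgindep : ∀ i j, i ≠ j → IndepFun (gbar i) (gbar j) P)
    (hM01 : ∀ i ω, M i ω = 0 ∨ M i ω = 1)
    (hMmean : ∀ i, ∫ ω, M i ω ∂P = p)
    (hgM : ∀ i j, IndepFun (gbar i) (M j) P)
    (hMM : ∀ i j, i ≠ j → IndepFun (M i) (M j) P)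
    (hprod : ∀ i j, i ≠ j →
      IndepFun (fun ω => gbar i ω * M i ω) (fun ω => gbar j ω * M j ω) P) :
    (Matrix.of fun i j =>
        (∫ ω, (gbar i ω / p * M i ω) * (gbar j ω / p * M j ω) ∂P)
          - (∫ ω, gbar i ω / p * M i ω ∂P) * ∫ ω, gbar j ω / p * M j ω ∂P)
      = (σg ^ 2 / (p * B)) • (1 : Matrix (Fin k) (Fin k) ℝ)
        + ((1 - p) / p) • Matrix.diagonal (fun i => (μ i) ^ 2) :=
  childTuningF_covariance_matrix_general P k B p σg μ hp gbar M hgL2 hgmean hgvar hM01 hMmean hgM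
    hprod
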